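/- Let G be a finite group acting on a finite set X. Then the groupoid cardinality of the action groupoid X // G (the category whose objects are elements of X and whose morphisms x → y are group elements g with g • x = y) equals #X / #G. -/

import Mathlib

open CategoryTheory

/-- The groupoid cardinality: the sum over isomorphism classes of objects of the
reciprocal of the number of automorphisms. -/
noncomputable def groupoidCard (C : Type*) [Category C] : ℝ :=
  ∑' X : Skeleton C, ((Nat.card (Aut X) : ℝ))⁻¹

/-!
Every isomorphism class `[x]` of a category with finitely many objects carries the weight
`1 / #Aut x`; spreading it evenly over the `#[x]` objects of the class writes the groupoid
cardinality as `∑ x, 1 / (#Aut x * #[x])`. In the action groupoid `X // G` we have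
`Aut x ≃ Stab x` and `[x] ≃ G • x`, so by orbit–stabilizer every summand is `1 / #G`.
-/

namespace CategoryTheory

open Finset

variable {C : Type*} [Category C]

theorem natCard_aut_toSkeleton (x : C) :
    Nat.card (Aut (toSkeleton x)) = Nat.card (Aut x) :=
  Nat.card_congr <|
    ((Functor.FullyFaithful.ofFullyFaithful (fromSkeleton C)).autMulEquivOfFullyFaithful _).trans
      (Aut.autMulEquivOfIso (fromSkeletonToSkeletonIso x)) |>.toEquiv

theorem natCard_isIsomorphic (x : C) :
    Nat.card {y : C // IsIsomorphic x y} = Nat.card {y : C // toSkeleton y = toSkeleton x} :=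
  Nat.card_congr <| Equiv.subtypeEquivRight fun _ =>
    toSkeleton_eq_toSkeleton_iff.symm.trans eq_comm

theorem groupoidCard_eq_sum [Fintype C] :
    groupoidCard C =
      ∑ x : C, ((Nat.card (Aut x) * Nat.card {y : C // IsIsomorphic x y} : ℕ) : ℝ)⁻¹ := by
  classical
  have : Fintype (Skeleton C) := @Fintype.ofFinite _ (Quotient.finite _)
  rw [groupoidCard, tsum_fintype, ← sum_fiberwise univ (toSkeleton : C → Skeleton C)]
  refine sum_congr rfl fun q _ => ?_
  have h_summand : ∀ x ∈ ({x | toSkeleton x = q} : Finset C),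
      Nat.card (Aut x) * Nat.card {y : C // IsIsomorphic x y} =
        Nat.card (Aut q) * #{x | toSkeleton x = q} := by
    intro x hx
    obtain rfl := (mem_filter.mp hx).2
    rw [natCard_aut_toSkeleton, natCard_isIsomorphic,
      Nat.card_eq_fintype_card (α := Subtype _), Fintype.card_subtype]
  have h_ne : (#{x | toSkeleton x = q} : ℝ) ≠ 0 := by
    obtain ⟨x₀, hx₀⟩ := Quotient.exists_rep q
    exact_mod_cast card_ne_zero.mpr ⟨x₀, mem_filter.mpr ⟨mem_univ _, hx₀⟩⟩
  rw [sum_congr rfl fun x hx => by rw [h_summand x hx], sum_const, nsmul_eq_mul, Nat.cast_mul,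
    mul_inv, mul_left_comm, mul_inv_cancel₀ h_ne, mul_one]

namespace ActionCategory

variable {G X : Type*} [Group G] [MulAction G X]

instance [Finite X] : Finite (ActionCategory G X) := .of_equiv X (objEquiv G X)

def autEquivStabilizer (x : ActionCategory G X) : Aut x ≃ MulAction.stabilizer G x.back :=
  Groupoid.isoEquivHom x x

theorem isIsomorphic_iff_mem_orbit {x y : ActionCategory G X} :
    IsIsomorphic x y ↔ y.back ∈ MulAction.orbit G x.back :=
  (Groupoid.isoEquivHom x y).nonempty_congr.trans nonempty_subtype

def isIsomorphicEquivOrbit (x : ActionCategory G X) :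
    {y // IsIsomorphic x y} ≃ MulAction.orbit G x.back :=
  Equiv.subtypeEquiv (objEquiv G X).symm fun _ => isIsomorphic_iff_mem_orbit

theorem natCard_aut_mul_natCard_isIsomorphic (x : ActionCategory G X) :
    Nat.card (Aut x) * Nat.card {y // IsIsomorphic x y} = Nat.card G := by
  rw [Nat.card_congr (autEquivStabilizer x), Nat.card_congr (isIsomorphicEquivOrbit x), mul_comm,
    ← Nat.card_prod]
  exact Nat.card_congr (MulAction.orbitProdStabilizerEquivGroup G x.back)

end ActionCategory

end CategoryTheory

theorem groupoidCard_actionCategory_general (G : Type*) [Group G]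
    (X : Type*) [Finite X] [MulAction G X] :
    groupoidCard (ActionCategory G X) = (Nat.card X : ℝ) / (Nat.card G : ℝ) := by
  have := Fintype.ofFinite (ActionCategory G X)
  simp only [groupoidCard_eq_sum, ActionCategory.natCard_aut_mul_natCard_isIsomorphic,
    Finset.sum_const, Finset.card_univ, nsmul_eq_mul, div_eq_mul_inv]
  rw [← Nat.card_eq_fintype_card, ← Nat.card_congr (ActionCategory.objEquiv G X)]

/-- For a finite group `G` acting on a finite set `X`, the groupoid cardinality of the
action groupoid `X // G` is `#X / #G`. -/
theorem groupoidCard_actionCategory (G : Type*) [Group G] [Finite G]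
    (X : Type*) [Finite X] [MulAction G X] :
    groupoidCard (ActionCategory G X) = (Nat.card X : ℝ) / (Nat.card G : ℝ) :=
  groupoidCard_actionCategory_general G X
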